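/- Let Q ≠ 0 and s ∈ (0,1] satisfy sM² > Q² (so M > 0), and let Λ = Λ₋ (which is then negative). Then there exists r₀ > 0 such that P(r₀,s) = 0, P'(r₀,s) = 0 and P''(r₀,s) < 0; moreover P(r,s) < 0 for every real r ≠ r₀. -/
import Mathlib


noncomputable section

/-- The quartic polynomial `P(r,s) = sL/3*r^4 - r^2 + 2sM*r - sQ^2` (case `Q != 0`). -/
def P (M Q Λ s r : ℝ) : ℝ := s * Λ / 3 * r ^ 4 - r ^ 2 + 2 * s * M * r - s * Q ^ 2

/-- First derivative of `P` with respect to `r`. -/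
def P' (M Q Λ s r : ℝ) : ℝ := 4 * s * Λ / 3 * r ^ 3 - 2 * r + 2 * s * M

/-- Second derivative of `P` with respect to `r`. -/
def P'' (M Q Λ s r : ℝ) : ℝ := 4 * s * Λ * r ^ 2 - 2

/-- `Λ₋`, defined for `β := 9sM² − 8Q² ≥ 0`. -/
def Λminus (M Q s : ℝ) : ℝ :=
  1 / (32 * s ^ 2 * Q ^ 6) *
    (8 * Q ^ 4 - (9 * s * M ^ 2 - 8 * Q ^ 2) * (9 * s * M ^ 2 - 8 * Q ^ 2 + 4 * Q ^ 2)
      - 3 * Real.sqrt (s * M ^ 2 * (9 * s * M ^ 2 - 8 * Q ^ 2) ^ 3))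

/-- `Λ₊`, defined for `β := 9sM² − 8Q² ≥ 0`. -/
def Λplus (M Q s : ℝ) : ℝ :=
  1 / (32 * s ^ 2 * Q ^ 6) *
    (8 * Q ^ 4 - (9 * s * M ^ 2 - 8 * Q ^ 2) * (9 * s * M ^ 2 - 8 * Q ^ 2 + 4 * Q ^ 2)
      + 3 * Real.sqrt (s * M ^ 2 * (9 * s * M ^ 2 - 8 * Q ^ 2) ^ 3))

/-- Case D₄ (Q ≠ 0, sM² > Q², Λ = Λ₋ < 0): a positive double root with a local maximum,
and `P` negative elsewhere. -/
theorem double_root_case_D4 (M Q s : ℝ)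
    (hQ : Q ≠ 0) (hM : 0 < M) (hs0 : 0 < s) (hs1 : s ≤ 1)
    (h : Q ^ 2 < s * M ^ 2) :
    Λminus M Q s < 0 ∧
    ∃ r₀ : ℝ, 0 < r₀ ∧ P M Q (Λminus M Q s) s r₀ = 0 ∧
      P' M Q (Λminus M Q s) s r₀ = 0 ∧ P'' M Q (Λminus M Q s) s r₀ < 0 ∧
      ∀ r : ℝ, r ≠ r₀ → P M Q (Λminus M Q s) s r < 0 := by
  have hQ2 : 0 < Q ^ 2 := by positivity
  have hβ : 0 < 9 * s * M ^ 2 - 8 * Q ^ 2 := by nlinarith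
  set t : ℝ := Real.sqrt (s * (9 * s * M ^ 2 - 8 * Q ^ 2)) with htdef
  have ht2 : t ^ 2 = s * (9 * s * M ^ 2 - 8 * Q ^ 2) := Real.sq_sqrt (by positivity)
  have ht0 : 0 < t := Real.sqrt_pos.2 (by positivity)
  have hsM : 0 < s * M := by positivity
  have h3 : t < 3 * s * M := by nlinarith
  have hts : s * M < t := by nlinarith
  have h3s : 0 < 3 * s * M - t := by linarith
  have hsqrt : Real.sqrt (s * M ^ 2 * (9 * s * M ^ 2 - 8 * Q ^ 2) ^ 3)
      = M * (9 * s * M ^ 2 - 8 * Q ^ 2) * t := by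
    rw [show s * M ^ 2 * (9 * s * M ^ 2 - 8 * Q ^ 2) ^ 3
        = (M * (9 * s * M ^ 2 - 8 * Q ^ 2) * t) ^ 2 by rw [mul_pow, mul_pow, ht2]; ring]
    exact Real.sqrt_sq (by positivity)
  have hden : (32 * s ^ 2 * Q ^ 6 : ℝ) ≠ 0 := by positivity
  have hLm : Λminus M Q s * (32 * s ^ 2 * Q ^ 6)
      = 8 * Q ^ 4 - (9 * s * M ^ 2 - 8 * Q ^ 2) * (9 * s * M ^ 2 - 8 * Q ^ 2 + 4 * Q ^ 2)
        - 3 * (M * (9 * s * M ^ 2 - 8 * Q ^ 2) * t) := by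
    rw [Λminus, hsqrt]; field_simp
  have hLrel : Λminus M Q s * (s * (3 * s * M - t) ^ 3) = 6 * (s * M - t) := by
    have key : Λminus M Q s * (s * (3 * s * M - t) ^ 3) * (32 * s ^ 2 * Q ^ 6)
        = 6 * (s * M - t) * (32 * s ^ 2 * Q ^ 6) := by
      linear_combination (s * (3 * s * M - t) ^ 3) * hLm +
        (24 * Q ^ 4 * s * t - 24 * M * Q ^ 2 * s * t ^ 2 - 24 * M * Q ^ 4 * s ^ 2
          + 108 * M ^ 2 * Q ^ 2 * s ^ 2 * t + 27 * M ^ 3 * s ^ 2 * t ^ 2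
          - 108 * M ^ 3 * Q ^ 2 * s ^ 3 - 162 * M ^ 4 * s ^ 3 * t
          + 243 * M ^ 5 * s ^ 4) * ht2
    exact mul_right_cancel₀ hden key
  have hΛneg : Λminus M Q s < 0 := by
    have hpos : 0 < s * (3 * s * M - t) ^ 3 := mul_pos hs0 (pow_pos h3s 3)
    nlinarith [hLrel]
  refine ⟨hΛneg, (3 * s * M - t) / 2, by linarith, ?_, ?_, ?_, ?_⟩
  · -- P(r₀) = 0, from the factorization identity
    have key : P M Q (Λminus M Q s) s ((3 * s * M - t) / 2)
        * ((3 * s * M - t) ^ 3 * (t - s * M)) = 0 := by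
      rw [P]
      linear_combination (((3 * s * M - t) / 2) ^ 4 * (t - s * M) / 3) * hLrel +
        (t ^ 4 / 8 - 5 / 4 * M * s * t ^ 3 + 9 / 2 * M ^ 2 * s ^ 2 * t ^ 2
          - 27 / 4 * M ^ 3 * s ^ 3 * t + 27 / 8 * M ^ 4 * s ^ 4) * ht2
    have hD : ((3 * s * M - t) ^ 3 * (t - s * M) : ℝ) ≠ 0 :=
      ne_of_gt (mul_pos (pow_pos h3s 3) (by linarith))
    exact (mul_eq_zero.1 key).resolve_right hD
  · -- P'(r₀) = 0
    have key : P' M Q (Λminus M Q s) s ((3 * s * M - t) / 2) * (3 * s * M - t) ^ 3 = 0 := by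
      rw [P']
      linear_combination ((3 * s * M - t) ^ 3 / 6) * hLrel
    have hD : ((3 * s * M - t) ^ 3 : ℝ) ≠ 0 := ne_of_gt (pow_pos h3s 3)
    exact (mul_eq_zero.1 key).resolve_right hD
  · -- P''(r₀) < 0
    rw [P'']
    nlinarith [mul_pos (mul_pos hs0 (neg_pos.mpr hΛneg)) (pow_pos (by linarith : (0:ℝ) < (3 * s * M - t) / 2) 2)]
  · -- P(r) < 0 elsewhere
    intro r hr
    have key : P M Q (Λminus M Q s) s r * ((3 * s * M - t) ^ 3 * (t - s * M))
        = 2 * (s * M - t) * (r - (3 * s * M - t) / 2) ^ 2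
          * ((r + (3 * s * M - t) / 2) ^ 2 * (t - s * M)
            + s * M * (3 * s * M - t) ^ 2) := by
      rw [P]
      linear_combination (r ^ 4 * (t - s * M) / 3) * hLrel +
        (t ^ 4 / 8 - 5 / 4 * M * s * t ^ 3 + 9 / 2 * M ^ 2 * s ^ 2 * t ^ 2
          - 27 / 4 * M ^ 3 * s ^ 3 * t + 27 / 8 * M ^ 4 * s ^ 4) * ht2
    have hsq : 0 < (r - (3 * s * M - t) / 2) ^ 2 :=
      lt_of_le_of_ne (sq_nonneg _) (Ne.symm (pow_ne_zero 2 (sub_ne_zero.2 hr)))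
    have hB : 0 < (r + (3 * s * M - t) / 2) ^ 2 * (t - s * M)
        + s * M * (3 * s * M - t) ^ 2 := by
      have h1 : 0 ≤ (r + (3 * s * M - t) / 2) ^ 2 * (t - s * M) :=
        mul_nonneg (sq_nonneg _) (by linarith)
      have h2 : 0 < s * M * (3 * s * M - t) ^ 2 := mul_pos hsM (pow_pos h3s 2)
      linarith
    have hRHS : 2 * (s * M - t) * (r - (3 * s * M - t) / 2) ^ 2
        * ((r + (3 * s * M - t) / 2) ^ 2 * (t - s * M)
          + s * M * (3 * s * M - t) ^ 2) < 0 :=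
      mul_neg_of_neg_of_pos (mul_neg_of_neg_of_pos (by linarith) hsq) hB
    have hD : 0 < (3 * s * M - t) ^ 3 * (t - s * M) :=
      mul_pos (pow_pos h3s 3) (by linarith)
    by_contra hc
    push_neg at hc
    exact absurd (key ▸ hRHS) (not_lt.2 (mul_nonneg hc hD.le))
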